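/- arXiv:2202.07041 — 4 statements merged into one kernel-verified Lean document; each statement's English description precedes it below -/
import Mathlib

section
/- Let n > 2 and p > 1. There exists a real β with δ(β) ≤ 0, where δ(β) = ((n−1)β(p−1)/(n+2))² − [nβ(p−1)/(n+2) + (1 + β(p−2))(β−1)], if and only if p ≤ 2n/(n−2), provided (n,p) ≠ (3,6) and the leading coefficient A = ((n−1)(p−1)/(n+2))² + 2 − p is nonzero. -/
theorem stmt_3 (n p : ℝ) (hn : 2 < n) (hp : 1 < p) (hnp : (n, p) ≠ (3, 6))
    (hA : ((n - 1) * (p - 1) / (n + 2)) ^ 2 + 2 - p ≠ 0) :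
    (∃ β : ℝ,
      ((n - 1) * β * (p - 1) / (n + 2)) ^ 2
          - (n / (n + 2) * β * (p - 1) + (1 + β * (p - 2)) * (β - 1)) ≤ 0)
      ↔ p ≤ 2 * n / (n - 2) := by
  have hn2 : (n + 2) ≠ 0 := by linarith
  set A : ℝ := ((n - 1) * (p - 1) / (n + 2)) ^ 2 + 2 - p with hAdef
  set B : ℝ := (n + 3 - p) / (n + 2) with hBdef
  have hδ : ∀ β : ℝ, ((n - 1) * β * (p - 1) / (n + 2)) ^ 2
          - (n / (n + 2) * β * (p - 1) + (1 + β * (p - 2)) * (β - 1))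
        = A * β ^ 2 - 2 * B * β + 1 := by
    intro β
    rw [hAdef, hBdef]
    field_simp
    ring
  have hdisc : B ^ 2 - A = n * (p - 1) * (2 * n - p * (n - 2)) / (n + 2) ^ 2 := by
    rw [hAdef, hBdef]
    field_simp
    ring
  constructor
  · rintro ⟨β, hβ⟩
    rw [hδ] at hβ
    have hBA : 0 ≤ B ^ 2 - A := by
      rcases lt_or_gt_of_ne hA with h | h
      · nlinarith [sq_nonneg B]
      · nlinarith [sq_nonneg (A * β - B)]
    rw [hdisc] at hBA
    have h1 : 0 ≤ 2 * n - p * (n - 2) := by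
      by_contra h
      push_neg at h
      have hneg : n * (p - 1) * (2 * n - p * (n - 2)) / (n + 2) ^ 2 < 0 := by
        apply div_neg_of_neg_of_pos
        · nlinarith
        · positivity
      linarith
    rw [le_div_iff₀ (by linarith : (0:ℝ) < n - 2)]
    linarith
  · intro hple
    rw [le_div_iff₀ (by linarith : (0:ℝ) < n - 2)] at hple
    have hBA : 0 ≤ B ^ 2 - A := by
      rw [hdisc]
      apply div_nonneg
      · exact mul_nonneg (mul_nonneg (by linarith) (by linarith)) (by linarith)
      · positivity
    set s := Real.sqrt (B ^ 2 - A) with hsdef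
    have hs : s ^ 2 = B ^ 2 - A := Real.sq_sqrt hBA
    refine ⟨(B + s) / A, ?_⟩
    rw [hδ]
    have hz : A * ((B + s) / A) ^ 2 - 2 * B * ((B + s) / A) + 1 = 0 := by
      field_simp
      nlinarith [hs]
    linarith
end

section
/- Let n > 0 be a real number and let u be a C² function on [−1,1] with u'(±1) = 0, where dν_n(z) = Z_n^{-1} (1−z²)^{(n−2)/2} dz is the normalized probability measure with Z_n = √π Γ(n/2)/Γ((n+1)/2), and L f = (1−z²) f'' − n z f'. Then ∫ (L u)² dν_n = ∫ |u''|² (1−z²)² dν_n + n ∫ |u'|² (1−z²) dν_n. -/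
/-!
With `w = (1 - z²)^((n-2)/2)` and `F = -z (1 - z²)^(n/2) u'²` one has, pointwise on `(-1, 1)`,
`w (L u)² = w (1 - z²)² u''² + n w (1 - z²) u'² + n F'`, and `F(±1) = 0`, so `F'` integrates
to zero.
The delicate point is integrability of `F'` for `n < 2`, where `w` blows up at `±1`: there the
boundary condition `u'(±1) = 0` and the mean value theorem give `u'² ≤ K² (1 - z²)`, hence
`z² u'² w ≤ K² (1 - z²)^(n/2)`.
-/

open MeasureTheory Real Set

theorem sq_le_mul_of_abs_deriv_le {f : ℝ → ℝ} {a b K : ℝ}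
    (hf : ∀ x ∈ Icc a b, DifferentiableAt ℝ f x) (hK : ∀ x ∈ Icc a b, |deriv f x| ≤ K)
    (ha : f a = 0) (hb : f b = 0) {z : ℝ} (hz : z ∈ Icc a b) :
    f z ^ 2 ≤ K ^ 2 * ((z - a) * (b - z)) := by
  have hab : a ≤ b := hz.1.trans hz.2
  have hfa : |f z| ≤ K * (z - a) := by
    simpa [ha, abs_of_nonneg (sub_nonneg.2 hz.1)] using
      (convex_Icc a b).norm_image_sub_le_of_norm_deriv_le hf hK (left_mem_Icc.2 hab) hz
  have hfb : |f z| ≤ K * (b - z) := by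
    simpa [hb, abs_sub_comm, abs_of_nonneg (sub_nonneg.2 hz.2)] using
      (convex_Icc a b).norm_image_sub_le_of_norm_deriv_le hf hK (right_mem_Icc.2 hab) hz
  calc f z ^ 2 = |f z| * |f z| := by rw [sq, abs_mul_abs_self]
    _ ≤ K * (z - a) * (K * (b - z)) :=
      mul_le_mul hfa hfb (abs_nonneg _) ((abs_nonneg _).trans hfa)
    _ = K ^ 2 * ((z - a) * (b - z)) := by ring

theorem rpow_mul_self_of_add_one_ne_zero {x y : ℝ} (hy : y + 1 ≠ 0) :
    x ^ y * x = x ^ (y + 1) := by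
  rcases eq_or_ne x 0 with rfl | hx
  · rw [mul_zero, zero_rpow hy]
  · rw [rpow_add_one hx]

theorem integral_withDensity_ofReal_restrict_Icc {ρ : ℝ → ℝ} {a b : ℝ} (hab : a ≤ b)
    (hρ : Measurable ρ) (hρ_nonneg : ∀ z ∈ Icc a b, 0 ≤ ρ z) (g : ℝ → ℝ) :
    ∫ z, g z ∂(volume.restrict (Icc a b)).withDensity (fun z => ENNReal.ofReal (ρ z))
      = ∫ z in a..b, ρ z * g z := by
  rw [integral_withDensity_eq_integral_toReal_smul hρ.ennreal_ofReal
      (ae_of_all _ fun _ => ENNReal.ofReal_lt_top),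
    intervalIntegral.integral_of_le hab, ← integral_Icc_eq_integral_Ioc]
  refine setIntegral_congr_fun measurableSet_Icc fun z hz => ?_
  rw [ENNReal.toReal_ofReal (hρ_nonneg z hz), smul_eq_mul]

namespace Ultraspherical

noncomputable def op (n : ℝ) (u : ℝ → ℝ) (z : ℝ) : ℝ :=
  (1 - z ^ 2) * deriv (deriv u) z - n * z * deriv u z

noncomputable def flux (n : ℝ) (v : ℝ → ℝ) (z : ℝ) : ℝ :=
  -z * (1 - z ^ 2) ^ (n / 2) * v z ^ 2

noncomputable def fluxDeriv (n : ℝ) (v : ℝ → ℝ) (z : ℝ) : ℝ :=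
  n * (z ^ 2 * v z ^ 2 * (1 - z ^ 2) ^ ((n - 2) / 2))
    - (1 - z ^ 2) ^ (n / 2) * (v z ^ 2 + 2 * z * v z * deriv v z)

variable {n C : ℝ} {v : ℝ → ℝ}

theorem weight_mul_one_sub_sq (hn : n ≠ 0) (z : ℝ) :
    (1 - z ^ 2) ^ ((n - 2) / 2) * (1 - z ^ 2) = (1 - z ^ 2) ^ (n / 2) := by
  rw [rpow_mul_self_of_add_one_ne_zero (by contrapose! hn; linarith)]
  congr 1
  ring

theorem continuous_one_sub_sq_rpow {p : ℝ} (hp : 0 ≤ p) :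
    Continuous fun z : ℝ => (1 - z ^ 2) ^ p :=
  (continuous_const.sub (continuous_pow 2)).rpow_const fun _ => Or.inr hp

theorem intervalIntegrable_weight_mul_one_sub_sq_mul (hn : 0 < n) {f : ℝ → ℝ}
    (hf : Continuous f) :
    IntervalIntegrable (fun z => (1 - z ^ 2) ^ ((n - 2) / 2) * ((1 - z ^ 2) * f z))
      volume (-1) 1 := by
  simp_rw [← mul_assoc, weight_mul_one_sub_sq hn.ne']
  exact ((continuous_one_sub_sq_rpow (by positivity)).mul hf).intervalIntegrable _ _

theorem hasDerivAt_flux {z : ℝ} (hv : DifferentiableAt ℝ v z)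
    (hz : 1 - z ^ 2 ≠ 0) : HasDerivAt (flux n v) (fluxDeriv n v z) z := by
  have hq : HasDerivAt (fun y : ℝ => 1 - y ^ 2) (-(2 * z)) z := by
    simpa using (hasDerivAt_pow 2 z).const_sub 1
  refine (((hasDerivAt_id z).neg.mul (hq.rpow_const (p := n / 2) (Or.inl hz))).mul
    (hv.hasDerivAt.pow 2)).congr_deriv ?_
  have hpow : (1 - z ^ 2) ^ (n / 2) = (1 - z ^ 2) ^ (n / 2 - 1) * (1 - z ^ 2) := by
    rw [← rpow_add_one hz, sub_add_cancel]
  simp only [fluxDeriv, Pi.mul_apply, Pi.neg_apply, Pi.pow_apply, id, Nat.cast_ofNat]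
  rw [hpow, show (n - 2) / 2 = n / 2 - 1 by ring]
  ring

theorem intervalIntegrable_sq_mul_weight (hn : 0 < n) (hv : Measurable v)
    (hdecay : ∀ z ∈ Icc (-1 : ℝ) 1, v z ^ 2 ≤ C * (1 - z ^ 2)) :
    IntervalIntegrable (fun z => z ^ 2 * v z ^ 2 * (1 - z ^ 2) ^ ((n - 2) / 2)) volume (-1) 1 := by
  have hh := continuous_one_sub_sq_rpow (p := n / 2) (by positivity)
  refine ((hh.intervalIntegrable _ _).const_mul C).mono_fun' (by fun_prop) ?_
  rw [uIoc_of_le (by norm_num)]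
  filter_upwards [ae_restrict_mem measurableSet_Ioc] with z hz
  have hz2 : z ^ 2 ≤ 1 := by nlinarith [hz.1, hz.2]
  have hw : 0 ≤ (1 - z ^ 2) ^ ((n - 2) / 2) := rpow_nonneg (by linarith) _
  rw [Real.norm_of_nonneg (by positivity), ← weight_mul_one_sub_sq hn.ne']
  calc z ^ 2 * v z ^ 2 * (1 - z ^ 2) ^ ((n - 2) / 2)
      ≤ 1 * (C * (1 - z ^ 2)) * (1 - z ^ 2) ^ ((n - 2) / 2) := by
        gcongr
        exact hdecay z (Ioc_subset_Icc_self hz)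
    _ = _ := by ring

theorem intervalIntegrable_fluxDeriv (hn : 0 < n) (hv : ContDiff ℝ 1 v)
    (hdecay : ∀ z ∈ Icc (-1 : ℝ) 1, v z ^ 2 ≤ C * (1 - z ^ 2)) :
    IntervalIntegrable (fluxDeriv n v) volume (-1) 1 := by
  have hh := continuous_one_sub_sq_rpow (p := n / 2) (by positivity)
  have hv' : Continuous (deriv v) := hv.continuous_deriv le_rfl
  have hrest : Continuous fun z => (1 - z ^ 2) ^ (n / 2) * (v z ^ 2 + 2 * z * v z * deriv v z) := by
    fun_prop
  exact ((intervalIntegrable_sq_mul_weight hn hv.continuous.measurable hdecay).const_mul n).sub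
    (hrest.intervalIntegrable _ _)

theorem integral_fluxDeriv_eq_zero (hn : 0 < n) (hv : ContDiff ℝ 1 v)
    (hdecay : ∀ z ∈ Icc (-1 : ℝ) 1, v z ^ 2 ≤ C * (1 - z ^ 2)) :
    ∫ z in (-1)..1, fluxDeriv n v z = 0 := by
  have hh := continuous_one_sub_sq_rpow (p := n / 2) (by positivity)
  have hcont : Continuous (flux n v) := by unfold flux; fun_prop
  rw [intervalIntegral.integral_eq_sub_of_hasDerivAt_of_le (by norm_num) hcont.continuousOn
    (fun z hz => hasDerivAt_flux (hv.differentiable one_ne_zero z) (by nlinarith [hz.1, hz.2]))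
    (intervalIntegrable_fluxDeriv hn hv hdecay)]
  norm_num [flux, zero_rpow (by positivity : n / 2 ≠ 0)]

theorem integral_weight_mul_op_sq {u : ℝ → ℝ} (hn : 0 < n) (hu : ContDiff ℝ 2 u)
    (hbc : deriv u 1 = 0 ∧ deriv u (-1) = 0) :
    ∫ z in (-1)..1, (1 - z ^ 2) ^ ((n - 2) / 2) * op n u z ^ 2
      = (∫ z in (-1)..1, (1 - z ^ 2) ^ ((n - 2) / 2) * (deriv (deriv u) z ^ 2 * (1 - z ^ 2) ^ 2))
        + n * ∫ z in (-1)..1, (1 - z ^ 2) ^ ((n - 2) / 2) * (deriv u z ^ 2 * (1 - z ^ 2)) := by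
  have hv : ContDiff ℝ 1 (deriv u) := ContDiff.deriv' (n := 1) hu
  have hv' : Continuous (deriv (deriv u)) := hv.continuous_deriv le_rfl
  obtain ⟨K, hK⟩ :=
    isCompact_Icc.exists_bound_of_continuousOn (hv'.continuousOn (s := Icc (-1 : ℝ) 1))
  have hdecay : ∀ z ∈ Icc (-1 : ℝ) 1, deriv u z ^ 2 ≤ K ^ 2 * (1 - z ^ 2) := fun z hz =>
    (sq_le_mul_of_abs_deriv_le (fun x _ => hv.differentiable one_ne_zero x) hK hbc.2 hbc.1
      hz).trans_eq (by ring)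
  have hA : IntervalIntegrable (fun z => (1 - z ^ 2) ^ ((n - 2) / 2) *
      (deriv (deriv u) z ^ 2 * (1 - z ^ 2) ^ 2)) volume (-1) 1 :=
    (intervalIntegrable_weight_mul_one_sub_sq_mul hn
      (f := fun z => (1 - z ^ 2) * deriv (deriv u) z ^ 2) (by fun_prop)).congr_ae
      (ae_of_all _ fun z => by ring)
  have hB : IntervalIntegrable (fun z => (1 - z ^ 2) ^ ((n - 2) / 2) *
      (deriv u z ^ 2 * (1 - z ^ 2))) volume (-1) 1 :=
    (intervalIntegrable_weight_mul_one_sub_sq_mul hn (f := fun z => deriv u z ^ 2)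
      (by fun_prop)).congr_ae (ae_of_all _ fun z => by ring)
  have hF := intervalIntegrable_fluxDeriv hn hv hdecay
  calc ∫ z in (-1)..1, (1 - z ^ 2) ^ ((n - 2) / 2) * op n u z ^ 2
      = ∫ z in (-1)..1, ((1 - z ^ 2) ^ ((n - 2) / 2) * (deriv (deriv u) z ^ 2 * (1 - z ^ 2) ^ 2)
          + n * ((1 - z ^ 2) ^ ((n - 2) / 2) * (deriv u z ^ 2 * (1 - z ^ 2)))
          + n * fluxDeriv n (deriv u) z) := by
        refine intervalIntegral.integral_congr fun z _ => ?_
        simp only [op, fluxDeriv, ← weight_mul_one_sub_sq hn.ne']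
        ring
    _ = _ := by
        rw [intervalIntegral.integral_add (hA.add (hB.const_mul n)) (hF.const_mul n),
          intervalIntegral.integral_add hA (hB.const_mul n), intervalIntegral.integral_const_mul,
          intervalIntegral.integral_const_mul, integral_fluxDeriv_eq_zero hn hv hdecay, mul_zero,
          add_zero]

end Ultraspherical

theorem stmt_6 (n : ℝ) (hn : 0 < n) (u : ℝ → ℝ) (hu : ContDiff ℝ 2 u)
    (hbc : deriv u 1 = 0 ∧ deriv u (-1) = 0)
    (ν : Measure ℝ)
    (hν : ν = (volume.restrict (Set.Icc (-1 : ℝ) 1)).withDensity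
      (fun z => ENNReal.ofReal
        ((1 - z ^ 2) ^ ((n - 2) / 2) / (Real.sqrt π * Gamma (n / 2) / Gamma ((n + 1) / 2)))))
    (L : ℝ → ℝ)
    (hL : ∀ z, L z = (1 - z ^ 2) * deriv (deriv u) z - n * z * deriv u z) :
    ∫ z, (L z) ^ 2 ∂ν
      = ∫ z, (deriv (deriv u) z) ^ 2 * (1 - z ^ 2) ^ 2 ∂ν
        + n * ∫ z, (deriv u z) ^ 2 * (1 - z ^ 2) ∂ν := by
  set Z := Real.sqrt π * Gamma (n / 2) / Gamma ((n + 1) / 2)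
  have hZ : 0 < Z := div_pos (mul_pos (sqrt_pos.2 pi_pos) (Gamma_pos_of_pos (by positivity)))
    (Gamma_pos_of_pos (by positivity))
  have hL' : L = Ultraspherical.op n u := funext hL
  have hν_integral : ∀ g : ℝ → ℝ,
      ∫ z, g z ∂ν = (∫ z in (-1)..1, (1 - z ^ 2) ^ ((n - 2) / 2) * g z) / Z := fun g => by
    rw [hν, integral_withDensity_ofReal_restrict_Icc (by norm_num) (by fun_prop)
      (fun z hz => div_nonneg (rpow_nonneg (by nlinarith [hz.1, hz.2]) _) hZ.le),
      ← intervalIntegral.integral_div]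
    simp only [div_mul_eq_mul_div]
  rw [hν_integral, hν_integral, hν_integral, hL',
    Ultraspherical.integral_weight_mul_op_sq hn hu hbc, add_div, mul_div_assoc]
end

section
/- For d ≥ 2, the constant d/(p−2) in the inequality ‖∇u‖₂² ≥ (d/(p−2))(‖u‖_p² − ‖u‖₂²) on the sphere S^d is optimal: taking u_ε = 1 + ε φ with −Δφ = dφ and expanding to second order in ε, the two sides are equal up to o(ε²). -/
/-!
Since `φ` is bounded, the Peano remainder in `|1 + t| ^ p = 1 + p t + p (p - 1) / 2 t² + o(t²)`
stays `o(ε²)` uniformly after substituting `t = ε φ x`, and `∫ φ = 0` kills the linear term: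
`‖u_ε‖_p^p = 1 + p (p - 1) / 2 ε² ∫ φ² + o(ε²)`. Taking the power `2 / p` gives
`‖u_ε‖_p² = 1 + (p - 1) ε² ∫ φ² + o(ε²)`, while `‖u_ε‖₂² = 1 + ε² ∫ φ²`, so the right-hand side
is `d / (p - 2) · (p - 2) ε² ∫ φ² + o(ε²) = ε² d ∫ φ² + o(ε²)`.
-/

open MeasureTheory Filter Topology Asymptotics Set

section

variable {Ω : Type*} [MeasurableSpace Ω] {μ : Measure Ω}

theorem isLittleO_integral_of_isLittleO_prod_ae {α E F : Type*} [NormedAddCommGroup E]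
    [NormedSpace ℝ E] [SeminormedAddCommGroup F] [IsFiniteMeasure μ] {l : Filter α}
    {f : α → Ω → E} {g : α → F}
    (h : (fun q : α × Ω => f q.1 q.2) =o[l ×ˢ ae μ] fun q => g q.1) :
    (fun a => ∫ x, f a x ∂μ) =o[l] g := by
  refine IsLittleO.of_bound fun c hc => ?_
  set m := μ.real univ
  have hm : 0 ≤ m := measureReal_nonneg
  filter_upwards [(h.def (c := c / (m + 1)) (div_pos hc (by linarith))).curry] with a ha
  calc ‖∫ x, f a x ∂μ‖ ≤ c / (m + 1) * ‖g a‖ * m := norm_integral_le_of_norm_le_const ha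
    _ = c * ‖g a‖ * (m / (m + 1)) := by ring
    _ ≤ c * ‖g a‖ := mul_le_of_le_one_right (mul_nonneg hc.le (norm_nonneg _))
        ((div_le_one (by linarith)).2 (by linarith))

theorem isLittleO_integral_comp_mul [IsFiniteMeasure μ] {E : Type*} [NormedAddCommGroup E]
    [NormedSpace ℝ E] {h : ℝ → E} {n : ℕ} (hh : h =o[𝓝 0] fun t => t ^ n) {φ : Ω → ℝ} {C : ℝ}
    (hC : ∀ᵐ x ∂μ, |φ x| ≤ C) :
    (fun ε => ∫ x, h (ε * φ x) ∂μ) =o[𝓝 0] fun ε => ε ^ n := by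
  apply isLittleO_integral_of_isLittleO_prod_ae
  have hlin : (fun q : ℝ × Ω => q.1 * φ q.2) =O[𝓝 0 ×ˢ ae μ] Prod.fst := by
    refine IsBigO.of_bound C ((tendsto_snd.eventually hC).mono fun q hq => ?_)
    rw [norm_mul, mul_comm, Real.norm_eq_abs (φ _)]
    exact mul_le_mul_of_nonneg_right hq (norm_nonneg _)
  exact (hh.comp_tendsto (hlin.trans_tendsto tendsto_fst)).trans_isBigO (hlin.pow n)

theorem Continuous.integrable_comp_of_ae_abs_le [IsFiniteMeasure μ] {F : ℝ → ℝ}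
    (hF : Continuous F) {φ : Ω → ℝ} (hφ : AEStronglyMeasurable φ μ) {C : ℝ}
    (hC : ∀ᵐ x ∂μ, |φ x| ≤ C) : Integrable (fun x => F (φ x)) μ := by
  obtain ⟨M, hM⟩ := isCompact_Icc.exists_bound_of_continuousOn (hF.continuousOn (s := Icc (-C) C))
  exact .of_bound (hF.comp_aestronglyMeasurable hφ) M (hC.mono fun x hx => hM _ (abs_le.1 hx))

theorem isLittleO_integral_comp_mul_sub_quadratic [IsProbabilityMeasure μ] {F : ℝ → ℝ}
    (hF : Continuous F) {a b : ℝ}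
    (hFt : (fun t => F t - (F 0 + a * t + b * t ^ 2)) =o[𝓝 0] fun t => t ^ 2)
    {φ : Ω → ℝ} (hφ : AEStronglyMeasurable φ μ) {C : ℝ} (hC : ∀ᵐ x ∂μ, |φ x| ≤ C)
    (hmean : ∫ x, φ x ∂μ = 0) :
    (fun ε => ∫ x, F (ε * φ x) ∂μ - (F 0 + b * ε ^ 2 * ∫ x, φ x ^ 2 ∂μ)) =o[𝓝 0]
      fun ε => ε ^ 2 := by
  refine (isLittleO_integral_comp_mul hFt hC).congr_left fun ε => ?_
  have hint : ∀ G : ℝ → ℝ, Continuous G → Integrable (fun x => G (φ x)) μ :=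
    fun G hG => hG.integrable_comp_of_ae_abs_le hφ hC
  rw [integral_sub (hint (fun y => F (ε * y)) (by fun_prop))
      (hint (fun y => F 0 + a * (ε * y) + b * (ε * y) ^ 2) (by fun_prop)),
    integral_add (hint (fun y => F 0 + a * (ε * y)) (by fun_prop))
      (hint (fun y => b * (ε * y) ^ 2) (by fun_prop)),
    integral_add (integrable_const _) (hint (fun y => a * (ε * y)) (by fun_prop))]
  simp only [mul_pow, ← mul_assoc, integral_const_mul, integral_const, hmean]
  simp

end

theorem HasDerivAt.isLittleO_comp_sub {α F : Type*} [SeminormedAddCommGroup F] {f : ℝ → ℝ}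
    {f' x : ℝ}
    (hf : HasDerivAt f f' x) {l : Filter α} {N : α → ℝ} (hN : Tendsto N l (𝓝 x)) {g : α → F}
    (hNg : (fun a => N a - x) =O[l] g) :
    (fun a => f (N a) - f x - f' * (N a - x)) =o[l] g :=
  ((hasDerivAt_iff_isLittleO.1 hf).comp_tendsto hN).trans_isBigO hNg |>.congr_left
    fun a => by simp [mul_comm]

theorem isLittleO_one_add_rpow_sub (p : ℝ) :
    (fun t : ℝ => (1 + t) ^ p - (1 + p * t + p * (p - 1) / 2 * t ^ 2)) =o[𝓝 0]
      fun t => t ^ 2 := by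
  have hderiv : ∀ t : ℝ, -1 < t → ∀ q : ℝ,
      HasDerivAt (fun s : ℝ => (1 + s) ^ q) (q * (1 + t) ^ (q - 1)) t := fun t ht q => by
    simpa using ((hasDerivAt_id t).const_add 1).rpow_const (p := q) (Or.inl (by simp; linarith))
  have hs : Ioi (-1 : ℝ) ∈ 𝓝 0 := Ioi_mem_nhds (by norm_num)
  have hf' := hasDerivAt_iff_isLittleO.1 ((hderiv 0 (by norm_num) (p - 1)).const_mul p)
  have hR := Convex.isLittleO_pow_succ_real (convex_Ioi (-1)) (mem_of_mem_nhds hs) (n := 1)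
    (f := fun t : ℝ => (1 + t) ^ p - (1 + p * t + p * (p - 1) / 2 * t ^ 2))
    (f' := fun t => p * (1 + t) ^ (p - 1) - (p + p * (p - 1) * t)) (fun t ht => ?_) ?_
  · simpa [nhdsWithin_eq_nhds.2 hs] using hR
  · exact ((hderiv t ht p).sub (((hasDerivAt_id t).const_mul p).const_add 1 |>.add
      (((hasDerivAt_id t).pow 2).const_mul _))).hasDerivWithinAt.congr_deriv (by simp; ring)
  · refine (hf'.trans_isBigO ?_).mono nhdsWithin_le_nhds |>.congr_left fun t => ?_
    · simpa using isBigO_refl _ _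
    · simp; ring

/-- `μ` models the uniform measure on `S^d`, `g` models `|∇φ|`, and `heig` is
`∫ |∇φ|² = d ∫ φ²`, obtained by integrating `-Δφ = d φ` against `φ`. -/
theorem stmt_11_general (d : ℕ) (p : ℝ) (hp : 2 < p)
    {Ω : Type*} [MeasurableSpace Ω] (μ : Measure Ω) [IsProbabilityMeasure μ]
    (φ : Ω → ℝ) (hφ : Measurable φ) (hbd : ∃ C : ℝ, ∀ x, |φ x| ≤ C)
    (hmean : ∫ x, φ x ∂μ = 0)
    (g : Ω → ℝ)
    (heig : ∫ x, (g x) ^ 2 ∂μ = d * ∫ x, (φ x) ^ 2 ∂μ) :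
    (∀ ε : ℝ, ∫ x, (ε * g x) ^ 2 ∂μ = ε ^ 2 * d * ∫ x, (φ x) ^ 2 ∂μ) ∧
    Filter.Tendsto
      (fun ε : ℝ =>
        ((d : ℝ) / (p - 2)
            * ((∫ x, |1 + ε * φ x| ^ p ∂μ) ^ (2 / p) - ∫ x, (1 + ε * φ x) ^ 2 ∂μ)
          - ε ^ 2 * d * ∫ x, (φ x) ^ 2 ∂μ) / ε ^ 2)
      (nhdsWithin 0 {0}ᶜ) (nhds 0) := by
  refine ⟨fun ε => by simp_rw [mul_pow, integral_const_mul, heig]; ring, ?_⟩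
  obtain ⟨C, hC⟩ := hbd
  have hC' : ∀ᵐ x ∂μ, |φ x| ≤ C := .of_forall hC
  set I := ∫ x, φ x ^ 2 ∂μ
  set N := fun ε : ℝ => ∫ x, |1 + ε * φ x| ^ p ∂μ
  have hN : (fun ε => N ε - (1 + p * (p - 1) / 2 * ε ^ 2 * I)) =o[𝓝 0] fun ε => ε ^ 2 := by
    have hF : Continuous fun t : ℝ => |1 + t| ^ p :=
      (continuous_const.add continuous_id).abs.rpow_const fun _ => .inr (by linarith)
    have hFt : (fun t => |1 + t| ^ p - (|1 + 0| ^ p + p * t + p * (p - 1) / 2 * t ^ 2))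
        =o[𝓝 0] fun t => t ^ 2 := by
      refine (isLittleO_one_add_rpow_sub p).congr' ?_ .rfl
      filter_upwards [Ioi_mem_nhds (show (-1 : ℝ) < 0 by norm_num)] with t (ht : -1 < t)
      simp [abs_of_pos (show 0 < 1 + t by linarith)]
    simpa using isLittleO_integral_comp_mul_sub_quadratic hF hFt hφ.aestronglyMeasurable hC'
      hmean
  have hsq : (fun ε => ∫ x, (1 + ε * φ x) ^ 2 ∂μ - (1 + ε ^ 2 * I)) =o[𝓝 0]
      fun ε => ε ^ 2 := by
    refine (isLittleO_integral_comp_mul_sub_quadratic (F := fun t => (1 + t) ^ 2) (a := 2)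
      (b := 1) (by fun_prop) ((isLittleO_zero _ _).congr_left fun t => by ring)
      hφ.aestronglyMeasurable hC' hmean).congr_left fun ε => by norm_num [I]
  have hNO : (fun ε => N ε - 1) =O[𝓝 0] fun ε => ε ^ 2 :=
    (hN.isBigO.add (isBigO_const_mul_self (p * (p - 1) / 2 * I) _ _)).congr_left
      fun ε => by ring
  have hN1 : Tendsto N (𝓝 0) (𝓝 1) := tendsto_sub_nhds_zero_iff.1 <|
    hNO.trans_tendsto (by simpa using (continuous_pow 2).tendsto (0 : ℝ))
  have hpow := (Real.hasDerivAt_rpow_const (x := 1) (p := 2 / p) (.inl one_ne_zero)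
    ).isLittleO_comp_sub hN1 hNO
  -- the target is `d / (p - 2)` times (remainder of `N ^ (2 / p)`) + `2 / p` · (remainder of `N`)
  -- − (remainder of `‖u_ε‖₂²`); the `ε²` terms cancel because `(p - 1) - 1 = p - 2`
  refine ((((hpow.add (hN.const_mul_left (2 / p))).sub hsq).const_mul_left
    ((d : ℝ) / (p - 2))).tendsto_div_nhds_zero.mono_left nhdsWithin_le_nhds).congr fun ε => ?_
  have : p - 2 ≠ 0 := by linarith
  have : p ≠ 0 := by linarith
  simp only [Real.one_rpow, N]
  field_simp
  ring

/-- Optimality of the constant `d/(p-2)` on the sphere: abstractly, `μ` is the uniform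
probability measure, `φ` a bounded eigenfunction of `-Δ` with eigenvalue `d` and zero mean,
and `g = |∇φ|` satisfies `∫ g² = d ∫ φ²` (integration by parts). Then
`‖∇(1+εφ)‖₂² = ε² ∫ g² = ε² d ∫ φ²` exactly, and the right-hand side of the inequality has
the same second-order expansion, so both sides agree up to `o(ε²)`. -/
theorem stmt_11 (d : ℕ) (hd : 2 ≤ d) (p : ℝ) (hp : 2 < p)
    (hp' : p ≤ 2 * d / ((d : ℝ) - 2))
    {Ω : Type*} [MeasurableSpace Ω] (μ : Measure Ω) [IsProbabilityMeasure μ]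
    (φ : Ω → ℝ) (hφ : Measurable φ) (hbd : ∃ C : ℝ, ∀ x, |φ x| ≤ C)
    (hmean : ∫ x, φ x ∂μ = 0)
    (g : Ω → ℝ) (hg : Measurable g)
    (hg2 : Integrable (fun x => (g x) ^ 2) μ)
    (heig : ∫ x, (g x) ^ 2 ∂μ = d * ∫ x, (φ x) ^ 2 ∂μ) :
    (∀ ε : ℝ, ∫ x, (ε * g x) ^ 2 ∂μ = ε ^ 2 * d * ∫ x, (φ x) ^ 2 ∂μ) ∧
    Filter.Tendsto
      (fun ε : ℝ =>
        ((d : ℝ) / (p - 2)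
            * ((∫ x, |1 + ε * φ x| ^ p ∂μ) ^ (2 / p) - ∫ x, (1 + ε * φ x) ^ 2 ∂μ)
          - ε ^ 2 * d * ∫ x, (φ x) ^ 2 ∂μ) / ε ^ 2)
      (nhdsWithin 0 {0}ᶜ) (nhds 0) :=
  stmt_11_general d p hp μ φ hφ hbd hmean g heig
end

section
/- Let d ≥ 1 be an integer, n real, ε > 0, and let u be C² on [−1,1]. With L_{ε,n} f = (1−z²)f'' − ℓ_{ε,n} f' where ℓ_{ε,n}(z) = z(n − ε(n−d)/(1+ε−z²)), and dν_{ε,n} = Z_{ε,n}^{-1}(1+ε−z²)^{(n−d)/2} dν_d: ∫(L_{ε,n} u)² dν_{ε,n} = ∫|u''|²(1−z²)² dν_{ε,n} + n∫(1−z²)|u'|² dν_{ε,n} − ε(n−d)∫ (1+ε+z²)/(1+ε−z²)² · (1−z²)|u'|² dν_{ε,n}. -/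
/-!
Writing `W` for the density of `ν_{ε,n}` and `ℓ` for the drift, the weight satisfies
`((1 - z²) W)' = -ℓ W`, so `L f = W⁻¹ ((1 - z²) W f')'` is symmetric. Expanding `(L u)²` and
integrating by parts once against the boundary term `(1 - z²) W ℓ (u')²`, which vanishes at
`±1` because `(1 - z²) W ~ (1 - z²)^{d/2}`, gives
`∫ (L u)² W = ∫ (u'')² (1 - z²)² W + ∫ ℓ' (1 - z²) (u')² W`, and
`ℓ' = n - ε (n - d) (1 + ε + z²) / (1 + ε - z²)²`.
-/

open MeasureTheory Set Filter
open scoped Topology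

theorem integral_sq_diffusion_eq {a b : ℝ} (hab : a < b) {B w ℓ ℓ' v v' : ℝ → ℝ}
    (hflux : ∀ z ∈ Ioo a b, HasDerivAt (fun x => B x * w x) (-(ℓ z * w z)) z)
    (hℓ : ∀ z ∈ Ioo a b, HasDerivAt ℓ (ℓ' z) z)
    (hv : ∀ z ∈ Ioo a b, HasDerivAt v (v' z) z)
    (ha : Tendsto (fun z => B z * w z * (ℓ z * v z ^ 2)) (𝓝[>] a) (𝓝 0))
    (hb : Tendsto (fun z => B z * w z * (ℓ z * v z ^ 2)) (𝓝[<] b) (𝓝 0))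
    (hintL : IntegrableOn (fun z => (B z * v' z - ℓ z * v z) ^ 2 * w z) (Ioo a b))
    (hintv' : IntegrableOn (fun z => v' z ^ 2 * B z ^ 2 * w z) (Ioo a b))
    (hintℓ' : IntegrableOn (fun z => ℓ' z * (B z * v z ^ 2) * w z) (Ioo a b)) :
    ∫ z in Ioo a b, (B z * v' z - ℓ z * v z) ^ 2 * w z
      = (∫ z in Ioo a b, v' z ^ 2 * B z ^ 2 * w z)
        + ∫ z in Ioo a b, ℓ' z * (B z * v z ^ 2) * w z := by
  -- The integrand difference is the derivative of the boundary term `B w ℓ v²`,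
  -- as `(B w)' = -ℓ w`.
  have hderiv : ∀ z ∈ Ioo a b, HasDerivAt (fun z => B z * w z * (ℓ z * v z ^ 2))
      (v' z ^ 2 * B z ^ 2 * w z + ℓ' z * (B z * v z ^ 2) * w z
        - (B z * v' z - ℓ z * v z) ^ 2 * w z) z := by
    intro z hz
    refine ((hflux z hz).fun_mul ((hℓ z hz).fun_mul ((hv z hz).fun_pow 2))).congr_deriv ?_
    norm_num
    ring
  have hsum : IntegrableOn
      (fun z => v' z ^ 2 * B z ^ 2 * w z + ℓ' z * (B z * v z ^ 2) * w z) (Ioo a b) :=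
    hintv'.add hintℓ'
  have hzero := intervalIntegral.integral_eq_sub_of_hasDerivAt_of_tendsto hab hderiv
    ((intervalIntegrable_iff_integrableOn_Ioo_of_le hab.le).mpr (hsum.sub hintL)) ha hb
  rw [intervalIntegral.integral_of_le hab.le, integral_Ioc_eq_integral_Ioo, sub_zero,
    integral_sub hsum hintL, integral_add hintv' hintℓ', sub_eq_zero] at hzero
  exact hzero.symm

theorem integrableOn_one_sub_sq_rpow {r : ℝ} (hr : -1 < r) :
    IntegrableOn (fun z : ℝ => (1 - z ^ 2) ^ r) (Ioo (-1) 1) := by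
  rcases le_or_gt 0 r with hr0 | hr0
  · have hc : Continuous fun z : ℝ => (1 - z ^ 2) ^ r :=
      continuous_iff_continuousAt.mpr fun z =>
        (Real.continuousAt_rpow_const _ _ (Or.inr hr0)).comp (by fun_prop)
    exact (hc.integrableOn_Icc (a := -1) (b := 1)).mono_set Ioo_subset_Icc_self
  have hright : IntegrableOn (fun z : ℝ => (1 - z) ^ r) (Ioo (-1) 1) := by
    have h := ((intervalIntegral.intervalIntegrable_rpow' hr).comp_sub_left (a := 2) (b := 0) 1)
    norm_num at h
    rw [intervalIntegrable_iff_integrableOn_Ioo_of_le (by norm_num)] at h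
    exact h
  have hleft : IntegrableOn (fun z : ℝ => (1 + z) ^ r) (Ioo (-1) 1) := by
    have h := ((intervalIntegral.intervalIntegrable_rpow' hr).comp_add_left (a := 0) (b := 2) 1)
    norm_num at h
    rw [intervalIntegrable_iff_integrableOn_Ioo_of_le (by norm_num)] at h
    exact h
  -- On each half of the interval one of the factors of `(1 - z) ^ r * (1 + z) ^ r` is at most `1`.
  refine (hright.add hleft).mono'
    (by fun_prop : Measurable fun z : ℝ => (1 - z ^ 2) ^ r).aestronglyMeasurable ?_
  filter_upwards [ae_restrict_mem measurableSet_Ioo] with z ⟨hz₁, hz₂⟩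
  have h₁ : 0 ≤ (1 - z) ^ r := Real.rpow_nonneg (by linarith) r
  have h₂ : 0 ≤ (1 + z) ^ r := Real.rpow_nonneg (by linarith) r
  rw [Real.norm_of_nonneg (Real.rpow_nonneg (by nlinarith) r),
    show 1 - z ^ 2 = (1 - z) * (1 + z) by ring, Real.mul_rpow (by linarith) (by linarith)]
  simp only [Pi.add_apply]
  rcases le_total 0 z with hz | hz
  · have : (1 + z) ^ r ≤ 1 := Real.rpow_le_one_of_one_le_of_nonpos (by linarith) hr0.le
    nlinarith
  · have : (1 - z) ^ r ≤ 1 := Real.rpow_le_one_of_one_le_of_nonpos (by linarith) hr0.le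
    nlinarith

noncomputable def ultrasphericalWeight (d n ε z : ℝ) : ℝ :=
  (1 + ε - z ^ 2) ^ ((n - d) / 2) * (1 - z ^ 2) ^ ((d - 2) / 2)

noncomputable def ultrasphericalDrift (d n ε z : ℝ) : ℝ :=
  z * (n - ε * (n - d) / (1 + ε - z ^ 2))

noncomputable def ultrasphericalMeasure (d n ε : ℝ) : Measure ℝ :=
  (volume.restrict (Icc (-1) 1)).withDensity fun z => ENNReal.ofReal (ultrasphericalWeight d n ε z)

section Ultraspherical

variable {d n ε : ℝ}

theorem one_add_sub_sq_pos {z : ℝ} (hε : 0 < ε) (hz : z ∈ Icc (-1 : ℝ) 1) :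
    0 < 1 + ε - z ^ 2 := by
  nlinarith [hz.1, hz.2]

theorem ultrasphericalWeight_nonneg {z : ℝ} (hε : 0 ≤ ε) (hz : z ∈ Icc (-1 : ℝ) 1) :
    0 ≤ ultrasphericalWeight d n ε z := by
  have : z ^ 2 ≤ 1 := by nlinarith [hz.1, hz.2]
  unfold ultrasphericalWeight
  exact mul_nonneg (Real.rpow_nonneg (by linarith) _) (Real.rpow_nonneg (by linarith) _)

theorem hasDerivAt_ultrasphericalDrift {z : ℝ} (hz : 1 + ε - z ^ 2 ≠ 0) :
    HasDerivAt (ultrasphericalDrift d n ε)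
      (n - ε * (n - d) * ((1 + ε + z ^ 2) / (1 + ε - z ^ 2) ^ 2)) z := by
  have hA : HasDerivAt (fun x : ℝ => 1 + ε - x ^ 2) (-(2 * z)) z := by
    simpa using (hasDerivAt_pow 2 z).const_sub (1 + ε)
  refine ((hasDerivAt_id z).fun_mul (((hasDerivAt_const z (ε * (n - d))).fun_div hA hz).const_sub
    n)).congr_deriv ?_
  simp only [id]
  field_simp
  ring

theorem continuousOn_ultrasphericalDrift (hε : 0 < ε) :
    ContinuousOn (ultrasphericalDrift d n ε) (Icc (-1) 1) := fun _ hz =>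
  (hasDerivAt_ultrasphericalDrift (one_add_sub_sq_pos hε hz).ne').continuousAt.continuousWithinAt

-- This is what makes `(1 - z²) f'' - ℓ f'` symmetric with respect to the weight.
theorem hasDerivAt_one_sub_sq_mul_ultrasphericalWeight {z : ℝ} (hA : 1 + ε - z ^ 2 ≠ 0)
    (hB : 1 - z ^ 2 ≠ 0) :
    HasDerivAt (fun x => (1 - x ^ 2) * ultrasphericalWeight d n ε x)
      (-(ultrasphericalDrift d n ε z * ultrasphericalWeight d n ε z)) z := by
  have hA' : HasDerivAt (fun x : ℝ => 1 + ε - x ^ 2) (-(2 * z)) z := by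
    simpa using (hasDerivAt_pow 2 z).const_sub (1 + ε)
  have hB' : HasDerivAt (fun x : ℝ => 1 - x ^ 2) (-(2 * z)) z := by
    simpa using (hasDerivAt_pow 2 z).const_sub 1
  refine (hB'.fun_mul ((hA'.rpow_const (p := (n - d) / 2) (Or.inl hA)).fun_mul
    (hB'.rpow_const (p := (d - 2) / 2) (Or.inl hB)))).congr_deriv ?_
  unfold ultrasphericalDrift ultrasphericalWeight
  rw [Real.rpow_sub_one hA, Real.rpow_sub_one hB]
  field_simp
  ring

theorem integrableOn_mul_ultrasphericalWeight (hd : 0 < d) (hε : 0 < ε) {c : ℝ → ℝ}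
    (hc : ContinuousOn c (Icc (-1) 1)) :
    IntegrableOn (fun z => c z * ultrasphericalWeight d n ε z) (Ioo (-1) 1) := by
  have hcA : ContinuousOn (fun z => c z * (1 + ε - z ^ 2) ^ ((n - d) / 2)) (Icc (-1) 1) :=
    hc.mul (ContinuousOn.rpow_const (by fun_prop)
      fun _ hz => Or.inl (one_add_sub_sq_pos hε hz).ne')
  refine ((integrableOn_one_sub_sq_rpow (r := (d - 2) / 2) (by linarith)).continuousOn_mul_of_subset
    hcA isCompact_Icc measurableSet_Ioo Ioo_subset_Icc_self).congr_fun (fun z _ => ?_)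
    measurableSet_Ioo
  simp only [ultrasphericalWeight]
  ring

theorem tendsto_one_sub_sq_mul_ultrasphericalWeight_mul (hd : 0 < d) (hε : 0 < ε) {a : ℝ}
    (ha : a ^ 2 = 1) {f : ℝ → ℝ} (hf : ContinuousAt f a) :
    Tendsto (fun z => (1 - z ^ 2) * ultrasphericalWeight d n ε z * f z)
      (𝓝[Ioo (-1) 1] a) (𝓝 0) := by
  -- `(1 - z²) W z = (1 - z²) ^ (d / 2) (1 + ε - z²) ^ ((n - d) / 2)` vanishes at `±1`
  -- since `d > 0`.
  have hcont : ContinuousAt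
      (fun z => (1 - z ^ 2) ^ (d / 2) * (1 + ε - z ^ 2) ^ ((n - d) / 2) * f z) a :=
    ((ContinuousAt.rpow_const (by fun_prop) (Or.inr (by positivity))).mul
      (ContinuousAt.rpow_const (by fun_prop) (Or.inl (by rw [ha]; linarith)))).mul hf
  have hlim := hcont.tendsto
  rw [ha, sub_self, Real.zero_rpow (by positivity), zero_mul, zero_mul] at hlim
  refine (hlim.mono_left nhdsWithin_le_nhds).congr' ?_
  filter_upwards [self_mem_nhdsWithin] with z ⟨hz₁, hz₂⟩
  have hB : 0 < 1 - z ^ 2 := by nlinarith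
  rw [ultrasphericalWeight, show d / 2 = 1 + (d - 2) / 2 by ring, Real.rpow_add hB, Real.rpow_one]
  ring

theorem integral_ultrasphericalMeasure (hε : 0 ≤ ε) (g : ℝ → ℝ) :
    ∫ z, g z ∂ultrasphericalMeasure d n ε
      = ∫ z in Ioo (-1) 1, g z * ultrasphericalWeight d n ε z := by
  have hW : Measurable (ultrasphericalWeight d n ε) := by
    unfold ultrasphericalWeight
    fun_prop
  rw [ultrasphericalMeasure, integral_withDensity_eq_integral_toReal_smul hW.ennreal_ofReal
    (ae_of_all _ fun _ => ENNReal.ofReal_lt_top), integral_Icc_eq_integral_Ioo]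
  refine setIntegral_congr_fun measurableSet_Ioo fun z hz => ?_
  rw [ENNReal.toReal_ofReal (ultrasphericalWeight_nonneg hε (Ioo_subset_Icc_self hz)),
    smul_eq_mul, mul_comm]

theorem withDensity_ofReal_ultrasphericalWeight_div (hε : 0 ≤ ε) (Z : ℝ) :
    (volume.restrict (Icc (-1) 1)).withDensity
        (fun z => ENNReal.ofReal (ultrasphericalWeight d n ε z / Z))
      = ENNReal.ofReal Z⁻¹ • ultrasphericalMeasure d n ε := by
  rw [ultrasphericalMeasure, ← withDensity_smul' _ _ ENNReal.ofReal_ne_top]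
  refine withDensity_congr_ae ?_
  filter_upwards [ae_restrict_mem measurableSet_Icc] with z hz
  rw [Pi.smul_apply, smul_eq_mul, ← ENNReal.ofReal_mul' (ultrasphericalWeight_nonneg hε hz),
    div_eq_inv_mul]

theorem setIntegral_sq_ultrasphericalOperator (hd : 0 < d) (hε : 0 < ε) {u : ℝ → ℝ}
    (hu : ContDiff ℝ 2 u) :
    ∫ z in Ioo (-1) 1, ((1 - z ^ 2) * deriv (deriv u) z
        - ultrasphericalDrift d n ε z * deriv u z) ^ 2 * ultrasphericalWeight d n ε z
      = (∫ z in Ioo (-1) 1,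
          deriv (deriv u) z ^ 2 * (1 - z ^ 2) ^ 2 * ultrasphericalWeight d n ε z)
        + ∫ z in Ioo (-1) 1, (n - ε * (n - d) * ((1 + ε + z ^ 2) / (1 + ε - z ^ 2) ^ 2))
            * ((1 - z ^ 2) * deriv u z ^ 2) * ultrasphericalWeight d n ε z := by
  have hu' : ContDiff ℝ 1 (deriv u) := hu.iterate_deriv' 1 1
  have hu'' : Continuous (deriv (deriv u)) := hu'.continuous_deriv le_rfl
  have hu'c : Continuous (deriv u) := hu'.continuous
  have hA : ∀ z ∈ Icc (-1 : ℝ) 1, 0 < 1 + ε - z ^ 2 := fun z hz => one_add_sub_sq_pos hε hz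
  have hk : ContinuousOn (fun z : ℝ => (1 + ε + z ^ 2) / (1 + ε - z ^ 2) ^ 2) (Icc (-1) 1) :=
    ContinuousOn.div (by fun_prop) (by fun_prop) fun z hz => (pow_pos (hA z hz) 2).ne'
  have hℓ := continuousOn_ultrasphericalDrift (d := d) (n := n) hε
  have hint {c : ℝ → ℝ} (hc : ContinuousOn c (Icc (-1) 1)) :=
    integrableOn_mul_ultrasphericalWeight (n := n) hd hε hc
  have hbd {a : ℝ} (ha : a ^ 2 = 1) :=
    tendsto_one_sub_sq_mul_ultrasphericalWeight_mul (n := n) hd hε ha (f := fun z =>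
        ultrasphericalDrift d n ε z * deriv u z ^ 2)
      (((hasDerivAt_ultrasphericalDrift (by rw [ha]; simpa using hε.ne')).continuousAt).mul
        (hu'c.pow 2).continuousAt)
  exact integral_sq_diffusion_eq (B := fun z => 1 - z ^ 2) (by norm_num)
    (fun z ⟨hz₁, hz₂⟩ => hasDerivAt_one_sub_sq_mul_ultrasphericalWeight
      (hA z ⟨hz₁.le, hz₂.le⟩).ne' (by nlinarith))
    (fun z hz => hasDerivAt_ultrasphericalDrift (hA z (Ioo_subset_Icc_self hz)).ne')
    (fun z _ => (hu'.differentiable one_ne_zero z).hasDerivAt)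
    (by rw [← nhdsWithin_Ioo_eq_nhdsGT (by norm_num : (-1 : ℝ) < 1)]; exact hbd (by norm_num))
    (by rw [← nhdsWithin_Ioo_eq_nhdsLT (by norm_num : (-1 : ℝ) < 1)]; exact hbd (by norm_num))
    (hint (by fun_prop)) (hint (by fun_prop)) (hint (by fun_prop))

theorem integral_sq_ultrasphericalOperator (hd : 0 < d) (hε : 0 < ε) {u : ℝ → ℝ}
    (hu : ContDiff ℝ 2 u) :
    ∫ z, ((1 - z ^ 2) * deriv (deriv u) z - ultrasphericalDrift d n ε z * deriv u z) ^ 2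
        ∂ultrasphericalMeasure d n ε
      = ∫ z, (deriv (deriv u) z) ^ 2 * (1 - z ^ 2) ^ 2 ∂ultrasphericalMeasure d n ε
        + n * ∫ z, (1 - z ^ 2) * (deriv u z) ^ 2 ∂ultrasphericalMeasure d n ε
        - ε * (n - d) * ∫ z,
            (1 + ε + z ^ 2) / (1 + ε - z ^ 2) ^ 2 * ((1 - z ^ 2) * (deriv u z) ^ 2)
            ∂ultrasphericalMeasure d n ε := by
  simp only [integral_ultrasphericalMeasure hε.le]
  have hu' : Continuous (deriv u) := (hu.iterate_deriv' 1 1).continuous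
  have hk : ContinuousOn (fun z : ℝ => (1 + ε + z ^ 2) / (1 + ε - z ^ 2) ^ 2) (Icc (-1) 1) :=
    ContinuousOn.div (by fun_prop) (by fun_prop) fun z hz =>
      (pow_pos (one_add_sub_sq_pos hε hz) 2).ne'
  have hB : IntegrableOn (fun z => (1 - z ^ 2) * deriv u z ^ 2 * ultrasphericalWeight d n ε z)
      (Ioo (-1) 1) := integrableOn_mul_ultrasphericalWeight hd hε (by fun_prop)
  have hkB : IntegrableOn (fun z => (1 + ε + z ^ 2) / (1 + ε - z ^ 2) ^ 2 *
      ((1 - z ^ 2) * deriv u z ^ 2) * ultrasphericalWeight d n ε z) (Ioo (-1) 1) :=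
    integrableOn_mul_ultrasphericalWeight hd hε (by fun_prop)
  rw [setIntegral_sq_ultrasphericalOperator hd hε hu, add_sub_assoc, ← integral_const_mul,
    ← integral_const_mul, ← integral_sub (hB.const_mul n) (hkB.const_mul _)]
  congr 1
  exact setIntegral_congr_fun measurableSet_Ioo fun z _ => by ring

end Ultraspherical

theorem stmt_16_general (d : ℕ) (hd : 1 ≤ d) (n ε : ℝ) (hε : 0 < ε)
    (Z : ℝ)
    (ν : Measure ℝ)
    (hν : ν = (volume.restrict (Set.Icc (-1 : ℝ) 1)).withDensity
      (fun z => ENNReal.ofReal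
        ((1 + ε - z ^ 2) ^ ((n - d) / 2) * (1 - z ^ 2) ^ (((d : ℝ) - 2) / 2) / Z)))
    (u : ℝ → ℝ) (hu : ContDiff ℝ 2 u)
    (ℓ : ℝ → ℝ) (hℓ : ∀ z, ℓ z = z * (n - ε * (n - d) / (1 + ε - z ^ 2))) :
    ∫ z, ((1 - z ^ 2) * deriv (deriv u) z - ℓ z * deriv u z) ^ 2 ∂ν
      = ∫ z, (deriv (deriv u) z) ^ 2 * (1 - z ^ 2) ^ 2 ∂ν
        + n * ∫ z, (1 - z ^ 2) * (deriv u z) ^ 2 ∂ν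
        - ε * (n - d) * ∫ z,
            (1 + ε + z ^ 2) / (1 + ε - z ^ 2) ^ 2 * ((1 - z ^ 2) * (deriv u z) ^ 2) ∂ν := by
  obtain rfl : ℓ = ultrasphericalDrift d n ε := funext hℓ
  have hν' : ν = ENNReal.ofReal Z⁻¹ • ultrasphericalMeasure d n ε :=
    hν.trans (withDensity_ofReal_ultrasphericalWeight_div hε.le Z)
  simp only [hν', integral_smul_measure, smul_eq_mul]
  rw [integral_sq_ultrasphericalOperator (Nat.cast_pos.mpr hd) hε hu]
  ring

theorem stmt_16 (d : ℕ) (hd : 1 ≤ d) (n ε : ℝ) (hε : 0 < ε)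
    (Z : ℝ)
    (hZ : Z = ∫ z in Set.Icc (-1 : ℝ) 1,
      (1 + ε - z ^ 2) ^ ((n - d) / 2) * (1 - z ^ 2) ^ (((d : ℝ) - 2) / 2))
    (ν : Measure ℝ)
    (hν : ν = (volume.restrict (Set.Icc (-1 : ℝ) 1)).withDensity
      (fun z => ENNReal.ofReal
        ((1 + ε - z ^ 2) ^ ((n - d) / 2) * (1 - z ^ 2) ^ (((d : ℝ) - 2) / 2) / Z)))
    (u : ℝ → ℝ) (hu : ContDiff ℝ 2 u)
    (ℓ : ℝ → ℝ) (hℓ : ∀ z, ℓ z = z * (n - ε * (n - d) / (1 + ε - z ^ 2))) :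
    ∫ z, ((1 - z ^ 2) * deriv (deriv u) z - ℓ z * deriv u z) ^ 2 ∂ν
      = ∫ z, (deriv (deriv u) z) ^ 2 * (1 - z ^ 2) ^ 2 ∂ν
        + n * ∫ z, (1 - z ^ 2) * (deriv u z) ^ 2 ∂ν
        - ε * (n - d) * ∫ z,
            (1 + ε + z ^ 2) / (1 + ε - z ^ 2) ^ 2 * ((1 - z ^ 2) * (deriv u z) ^ 2) ∂ν :=
  stmt_16_general d hd n ε hε Z ν hν u hu ℓ hℓ
end
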